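/- In an initialized quantitative reachability game (G, v₀), if there exists a Nash equilibrium whose cost profile is componentwise ≤ y for some threshold y ∈ (ℕ ∪ {+∞})^Π, then there exists a Nash equilibrium τ whose outcome is a lasso hℓ^ω of length |hℓ| ≤ (|Π|+1)·|V|, with cost profile ≤ y, and with Cost_i(outcome of τ) ≤ |Π|·|V| for every player i visiting his target set along the outcome of τ. -/

import Mathlib

open scoped Classical

structure Arena (V : Type) where
  E : V → V → Prop
  succ : ∀ v, ∃ w, E v w

variable {V P : Type}

/-- An infinite play: consecutive vertices are connected by edges. -/
def IsPlay (A : Arena V) (ρ : ℕ → V) : Prop := ∀ k, A.E (ρ k) (ρ (k + 1))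

/-- Cost: least index of a visit to `F`, or `⊤` if never visited. -/
noncomputable def cost (F : Set V) (ρ : ℕ → V) : ℕ∞ :=
  ⨅ (k : ℕ) (_ : ρ k ∈ F), (k : ℕ∞)

/-- Qualitative gain: `1` if the play visits `F`, else `0`. -/
noncomputable def gain (F : Set V) (ρ : ℕ → V) : ℕ :=
  if ∃ n, ρ n ∈ F then 1 else 0

/-- The set of players whose target set is visited along the play. -/
def visit (F : P → Set V) (ρ : ℕ → V) : Set P := {i | ∃ n, ρ n ∈ F i}

/-- The set of players whose target set is visited within the prefix `ρ₀…ρₖ`. -/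
def visitPrefix (F : P → Set V) (ρ : ℕ → V) (k : ℕ) : Set P := {i | ∃ n ≤ k, ρ n ∈ F i}

/-- A multiplayer reachability game: an arena, an owner for each vertex,
and a target set for each player. -/
structure Game (P V : Type) extends Arena V where
  owner : V → P
  F : P → Set V

/-- A strategy maps (past history, current vertex) to the next vertex. -/
abbrev Strat (V : Type) := List V → V → V

def IsStrategy (A : Arena V) (s : Strat V) : Prop := ∀ p v, A.E v (s p v)

noncomputable def histStep (G : Game P V) (σ : P → Strat V) :
    List V × V → List V × V :=
  fun x => (x.1 ++ [x.2], σ (G.owner x.2) x.1 x.2)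

/-- The unique play from `v0` consistent with the strategy profile `σ`. -/
noncomputable def outcome (G : Game P V) (σ : P → Strat V) (v0 : V) (k : ℕ) : V :=
  ((histStep G σ)^[k] ([], v0)).2

/-- Replace the strategy of player `i` by `s` in the profile `σ`. -/
noncomputable def updProfile (σ : P → Strat V) (i : P) (s : Strat V) : P → Strat V :=
  fun j => if j = i then s else σ j

/-- Nash equilibrium for the quantitative (cost-minimizing) semantics. -/
def IsNE (G : Game P V) (σ : P → Strat V) (v0 : V) : Prop :=
  (∀ i, IsStrategy G.toArena (σ i)) ∧
  ∀ (i : P) (s : Strat V), IsStrategy G.toArena s →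
    cost (G.F i) (outcome G σ v0) ≤ cost (G.F i) (outcome G (updProfile σ i s) v0)

/-- Nash equilibrium for the qualitative (gain-maximizing) semantics. -/
def IsNEqual (G : Game P V) (σ : P → Strat V) (v0 : V) : Prop :=
  (∀ i, IsStrategy G.toArena (σ i)) ∧
  ∀ (i : P) (s : Strat V), IsStrategy G.toArena s →
    gain (G.F i) (outcome G (updProfile σ i s) v0) ≤ gain (G.F i) (outcome G σ v0)

/-- The profile in which player `i` plays `s` and all other players (the
coalition `-i`) jointly play `t`. -/
noncomputable def coalProfile (i : P) (s t : Strat V) : P → Strat V :=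
  fun j => if j = i then s else t

/-- Value of the coalitional zero-sum game `G_i` from `v`: player `i`
minimizes the first hitting time of `F i` against the coalition. -/
noncomputable def val (G : Game P V) (i : P) (v : V) : ℕ∞ :=
  ⨅ s : {s : Strat V // IsStrategy G.toArena s},
    ⨆ t : {t : Strat V // IsStrategy G.toArena t},
      cost (G.F i) (outcome G (coalProfile i s.1 t.1) v)

/-- A positional (memoryless) strategy only depends on the current vertex. -/
def Positional (s : Strat V) : Prop := ∀ p q v, s p v = s q v

/-- An optimal strategy for the minimizer (player `i`) in `G_i`. -/
def OptimalMin (G : Game P V) (i : P) (s : Strat V) : Prop :=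
  IsStrategy G.toArena s ∧
  ∀ (v : V) (t : Strat V), IsStrategy G.toArena t →
    cost (G.F i) (outcome G (coalProfile i s t) v) ≤ val G i v

/-- An optimal strategy for the maximizer (the coalition `-i`) in `G_i`. -/
def OptimalMax (G : Game P V) (i : P) (t : Strat V) : Prop :=
  IsStrategy G.toArena t ∧
  ∀ (v : V) (s : Strat V), IsStrategy G.toArena s →
    val G i v ≤ cost (G.F i) (outcome G (coalProfile i s t) v)

/-- `λ`-consistency of a play. -/
def lambdaConsistent (G : Game P V) (lam : V → ℕ∞) (ρ : ℕ → V) : Prop :=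
  ∀ (i : P) (k : ℕ), G.owner (ρ k) = i → (∀ n ≤ k, ρ n ∉ G.F i) →
    cost (G.F i) (fun j => ρ (k + j)) ≤ lam (ρ k)

/-- A lasso `hℓ^ω` of length `|hℓ| ≤ L`. -/
def IsLasso (ρ : ℕ → V) (L : ℕ) : Prop :=
  ∃ n p, 0 < p ∧ n + p ≤ L ∧ ∀ k, n ≤ k → ρ (k + p) = ρ k

/-- The play obtained by removing the cycle `ρₖ…ρₖ₊ₗ` from `ρ`. -/
def removeCycle (ρ : ℕ → V) (k l : ℕ) : ℕ → V :=
  fun j => if j ≤ k then ρ j else ρ (j + l)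

/-- `ρₖ…ρₖ₊ₗ` is an unnecessary cycle: it is a (nontrivial) cycle inside of
which no new player visits his target set. -/
def UnnecessaryCycle (F : P → Set V) (ρ : ℕ → V) (k l : ℕ) : Prop :=
  0 < l ∧ ρ k = ρ (k + l) ∧ visitPrefix F ρ k = visitPrefix F ρ (k + l)

/-- The set of cost profiles of plays from `v0`. -/
def costProfiles (G : Game P V) (v0 : V) : Set (P → ℕ∞) :=
  {c | ∃ ρ, IsPlay G.toArena ρ ∧ ρ 0 = v0 ∧ c = fun i => cost (G.F i) ρ}

/-- The set of gain profiles of plays from `v0`. -/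
def gainProfiles (G : Game P V) (v0 : V) : Set (P → ℕ) :=
  {c | ∃ ρ, IsPlay G.toArena ρ ∧ ρ 0 = v0 ∧ c = fun i => gain (G.F i) ρ}

/-- Pareto optimality for cost profiles: minimal in the componentwise order. -/
def ParetoMinimal {α : Type} [Preorder α] (S : Set α) (p : α) : Prop :=
  p ∈ S ∧ ∀ q ∈ S, q ≤ p → q = p

/-- Pareto optimality for gain profiles: maximal in the componentwise order. -/
def ParetoMaximal {α : Type} [Preorder α] (S : Set α) (p : α) : Prop :=
  p ∈ S ∧ ∀ q ∈ S, p ≤ q → q = p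

/-- `h ++ [v]` is a history from `v0`: a finite path starting at `v0`
whose current (last) vertex is `v`; `h` is the strict past. -/
def IsHist (A : Arena V) (v0 : V) (h : List V) (v : V) : Prop :=
  (h ++ [v]).head? = some v0 ∧ List.Chain' A.E (h ++ [v])

/-- The strategy `s` shifted by the past history `h` (i.e. `s|h`). -/
noncomputable def shiftStrat (s : Strat V) (h : List V) : Strat V :=
  fun p v => s (h ++ p) v

/-- Gain of a play `ρ` in the subgame after past history `h`:
`1` iff `h·ρ` visits `F`. -/
noncomputable def gainAfter (F : Set V) (h : List V) (ρ : ℕ → V) : ℕ :=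
  if (∃ x ∈ h, x ∈ F) ∨ (∃ n, ρ n ∈ F) then 1 else 0

/-- Subgame perfect equilibrium for qualitative reachability games:
in every subgame after a history from `v0`, no player can strictly
increase his gain by a unilateral deviation. -/
def IsSPEqual (G : Game P V) (σ : P → Strat V) (v0 : V) : Prop :=
  (∀ i, IsStrategy G.toArena (σ i)) ∧
  ∀ (h : List V) (v : V), IsHist G.toArena v0 h v →
    ∀ (i : P) (s : Strat V), IsStrategy G.toArena s →
      gainAfter (G.F i) h
          (outcome G (updProfile (fun j => shiftStrat (σ j) h) i s) v) ≤
        gainAfter (G.F i) h (outcome G (fun j => shiftStrat (σ j) h) v)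

/-!
An equilibrium outcome `ρ` can be reshaped into `ρ ∘ r` for a reindexing `r : ℕ → ℕ`: the new
profile answers a history by translating it back into a history along `ρ`, so a deviation that
leaves `ρ ∘ r` after step `m` is replayed from step `r m` of `ρ`, and the equilibrium property
transfers as long as the costs along `ρ ∘ r` compare well with those of the shifted replays.
Two reindexings qualify. Cutting out a cycle inside which no new player reaches his target set
moves later first visits earlier; if some first visit happens after `|Π| · |V|` steps, such a cycle
occurs before it, since the pair (vertex, set of players already visited) must repeat. Once every
first visit happens within `|Π| · |V|` steps, some vertex repeats within the next `|V|` steps, and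
looping back there gives a lasso of length at most `(|Π| + 1) · |V|` with the same costs.
-/

section Histories

variable (f g : ℕ → V)

def hist (n : ℕ) : List V := (List.range n).map f

@[simp] lemma length_hist (n : ℕ) : (hist f n).length = n := by
  simp [hist]

lemma hist_succ (n : ℕ) : hist f (n + 1) = hist f n ++ [f n] := by
  simp [hist, List.range_succ]

lemma hist_add (a b : ℕ) : hist f (a + b) = hist f a ++ hist (fun t => f (a + t)) b := by
  simp [hist, List.range_add]

lemma drop_hist (a b : ℕ) : (hist f (a + b)).drop a = hist (fun t => f (a + t)) b := by
  rw [hist_add, List.drop_left' (length_hist f a)]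

lemma take_hist {j n : ℕ} (h : j ≤ n) : (hist f n).take j = hist f j := by
  simp [hist, ← List.map_take, List.take_range, h]

variable {f g}

lemma hist_congr {n : ℕ} (h : ∀ j < n, f j = g j) : hist f n = hist g n :=
  List.map_congr_left fun j hj => h j (List.mem_range.1 hj)

lemma hist_ne_of_ne {j n : ℕ} (hj : j < n) (hne : f j ≠ g j) : hist f n ≠ hist g n := by
  intro h
  exact hne (by simpa [hist, hj] using congrArg (·[j]?) h)

end Histories

section Outcomes

variable {G : Game P V} {σ : P → Strat V} {v0 : V}

lemma histStep_iterate (n : ℕ) :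
    (histStep G σ)^[n] ([], v0) = (hist (outcome G σ v0) n, outcome G σ v0 n) := by
  induction n with
  | zero => rfl
  | succ n ih =>
    refine Prod.ext ?_ rfl
    rw [Function.iterate_succ_apply', ih, hist_succ]
    rfl

lemma outcome_zero : outcome G σ v0 0 = v0 := rfl

lemma outcome_succ (n : ℕ) :
    outcome G σ v0 (n + 1) =
      σ (G.owner (outcome G σ v0 n)) (hist (outcome G σ v0) n) (outcome G σ v0 n) := by
  rw [outcome, Function.iterate_succ_apply', histStep_iterate]
  rfl

lemma outcome_eq_of {ρ : ℕ → V} (h0 : ρ 0 = v0)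
    (hρ : ∀ n, σ (G.owner (ρ n)) (hist ρ n) (ρ n) = ρ (n + 1)) : outcome G σ v0 = ρ := by
  funext n
  induction n using Nat.strong_induction_on with
  | _ n ih =>
    cases n with
    | zero => exact h0.symm
    | succ n =>
      rw [outcome_succ, hist_congr fun j hj => ih j (by omega), ih n (by omega), hρ]

end Outcomes

section Costs

variable {F : Set V} {ρ : ℕ → V}

lemma cost_le_of_mem {k : ℕ} (h : ρ k ∈ F) : cost F ρ ≤ k :=
  iInf₂_le k h

lemma le_cost {x : ℕ∞} (h : ∀ k, ρ k ∈ F → x ≤ k) : x ≤ cost F ρ :=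
  le_iInf₂ h

lemma cost_eq_of_first {n : ℕ} (hn : ρ n ∈ F) (hfirst : ∀ j < n, ρ j ∉ F) : cost F ρ = n :=
  le_antisymm (cost_le_of_mem hn)
    (le_cost fun k hk => Nat.cast_le.2 (not_lt.1 fun hlt => hfirst k hlt hk))

lemma cost_eq_find (h : ∃ k, ρ k ∈ F) : cost F ρ = Nat.find h :=
  cost_eq_of_first (Nat.find_spec h) fun _ hj => Nat.find_min h hj

lemma cost_eq_top (h : ∀ k, ρ k ∉ F) : cost F ρ = ⊤ :=
  top_le_iff.1 (le_cost fun k hk => (h k hk).elim)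

lemma mem_visit_iff_cost_ne_top {F : P → Set V} {i : P} :
    i ∈ visit F ρ ↔ cost (F i) ρ ≠ ⊤ := by
  refine ⟨fun h => by simp [cost_eq_find h], fun h => ?_⟩
  by_contra hv
  exact h (cost_eq_top fun k hk => hv ⟨k, hk⟩)

lemma exists_first_mem_of_cost_le {c : ℕ} (h : cost F ρ ≤ c) :
    ∃ n ≤ c, ρ n ∈ F ∧ ∀ j < n, ρ j ∉ F := by
  have hex : ∃ k, ρ k ∈ F := by
    by_contra hne
    push Not at hne
    simp [cost_eq_top hne] at h
  rw [cost_eq_find hex, Nat.cast_le] at h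
  exact ⟨Nat.find hex, h, Nat.find_spec hex, fun j hj => Nat.find_min hex hj⟩

lemma exists_cost_le_of_mem_visit [Finite P] (F : P → Set V) (ρ : ℕ → V) :
    ∃ N : ℕ, ∀ i ∈ visit F ρ, cost (F i) ρ ≤ N := by
  obtain ⟨N, hN⟩ := Finite.exists_le fun i => (cost (F i) ρ).toNat
  refine ⟨N, fun i hi => ?_⟩
  rw [← ENat.natCast_toNat (mem_visit_iff_cost_ne_top.1 hi)]
  exact_mod_cast hN i

lemma cost_comp_eq {r : ℕ → ℕ} {n : ℕ} (hr : ∀ m ≤ n, r m = m)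
    (hvis : cost F ρ ≠ ⊤ → cost F ρ ≤ n) : cost F (ρ ∘ r) = cost F ρ := by
  refine le_antisymm (le_cost fun c hc => ?_) (le_cost fun c hc => ?_)
  · obtain ⟨e, hec, he, hfirst⟩ := exists_first_mem_of_cost_le (cost_le_of_mem hc)
    have hcost := cost_eq_of_first he hfirst
    have hen : e ≤ n := by
      rw [hcost] at hvis
      exact_mod_cast hvis (ENat.natCast_ne_top e)
    exact (cost_le_of_mem (k := e) (show ρ (r e) ∈ F by rwa [hr e hen])).trans
      (Nat.cast_le.2 hec)
  · by_cases hcn : c ≤ n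
    · exact cost_le_of_mem (show ρ c ∈ F by rwa [← hr c hcn])
    · have hfin : cost F ρ ≠ ⊤ :=
        ((cost_le_of_mem (ρ := ρ) hc).trans_lt (ENat.natCast_lt_top _)).ne
      exact (hvis hfin).trans (Nat.cast_le.2 (by omega))

end Costs

section Reindexing

variable {G : Game P V} {σ : P → Strat V} {v0 : V} {ρ : ℕ → V} {r : ℕ → ℕ}

lemma exists_first_ne {f g : ℕ → V} (h0 : f 0 = g 0) (h : ∃ j, f j ≠ g j) :
    ∃ m, (∀ j ≤ m, f j = g j) ∧ f (m + 1) ≠ g (m + 1) := by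
  have h' : ∃ m, f (m + 1) ≠ g (m + 1) := by
    obtain ⟨j, hj⟩ := h
    cases j with
    | zero => exact absurd h0 hj
    | succ j => exact ⟨j, hj⟩
  refine ⟨Nat.find h', fun j hj => ?_, Nat.find_spec h'⟩
  cases j with
  | zero => exact h0
  | succ j => exact not_not.1 (Nat.find_min h' (by omega))

noncomputable def agreeLen (f : ℕ → V) (w : List V) : ℕ :=
  Nat.findGreatest (fun j => w.take j = hist f j) w.length

lemma agreeLen_hist {f g : ℕ → V} {d n : ℕ} (hagree : ∀ j < d, g j = f j) (hdn : d ≤ n)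
    (hne : d < n → g d ≠ f d) : agreeLen f (hist g n) = d := by
  rw [agreeLen, Nat.findGreatest_eq_iff, length_hist]
  refine ⟨hdn, fun _ => by rw [take_hist _ hdn, hist_congr hagree], fun k hdk hkn => ?_⟩
  rw [take_hist _ hkn]
  exact hist_ne_of_ne hdk (hne (by omega))

/-- A history that follows `ρ ∘ r` up to step `m` and then leaves it is answered as `σ` answers
the `ρ`-history up to step `r m` followed by the same continuation. -/
noncomputable def reindexProfile (σ : P → Strat V) (ρ : ℕ → V) (r : ℕ → ℕ) : P → Strat V :=
  fun j pl v =>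
    let m := agreeLen (ρ ∘ r) (pl ++ [v]) - 1
    σ j (hist ρ (r m) ++ pl.drop m) v

lemma reindexProfile_hist {π : ℕ → V} {m k : ℕ} (hagree : ∀ j ≤ m, π j = ρ (r j))
    (hmk : m ≤ k) (hne : m < k → π (m + 1) ≠ ρ (r (m + 1))) (j : P) :
    reindexProfile σ ρ r j (hist π k) (π k) = σ j (hist ρ (r m) ++ (hist π k).drop m) (π k) := by
  have hlen : agreeLen (ρ ∘ r) (hist π (k + 1)) = m + 1 :=
    agreeLen_hist (fun j hj => hagree j (by omega)) (by omega) fun h => hne (by omega)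
  simp only [reindexProfile, ← hist_succ, hlen, Nat.add_sub_cancel]

lemma outcome_reindexProfile (hρ : outcome G σ v0 = ρ) (h0 : ρ (r 0) = v0)
    (hstep : ∀ m, ρ (r m + 1) = ρ (r (m + 1))) :
    outcome G (reindexProfile σ ρ r) v0 = ρ ∘ r := by
  refine outcome_eq_of h0 fun n => ?_
  rw [reindexProfile_hist (ρ := ρ) (r := r) (π := ρ ∘ r) (fun _ _ => rfl) le_rfl
      (fun h => absurd h (lt_irrefl n)),
    List.drop_eq_nil_of_le (by simp), List.append_nil]
  exact (hρ ▸ outcome_succ (r n)).symm.trans (hstep n)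

noncomputable def replayStrat (σ : P → Strat V) (i : P) (s : Strat V) (q : ℕ) (h : List V) :
    Strat V :=
  fun pl v => if pl.length < q then σ i pl v else s (h ++ pl.drop q) v

lemma isStrategy_replayStrat {A : Arena V} {i : P} {s : Strat V} (hσ : IsStrategy A (σ i))
    (hs : IsStrategy A s) (q : ℕ) (h : List V) : IsStrategy A (replayStrat σ i s q h) := by
  intro pl v
  unfold replayStrat
  split_ifs
  exacts [hσ pl v, hs _ v]

lemma outcome_replayStrat {π : ℕ → V} {i : P} {s : Strat V} {m : ℕ}
    (hρ : outcome G σ v0 = ρ) (hπ : outcome G (updProfile (reindexProfile σ ρ r) i s) v0 = π)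
    (hagree : ∀ j ≤ m, π j = ρ (r j)) (hne : π (m + 1) ≠ ρ (r (m + 1))) (t : ℕ) :
    outcome G (updProfile σ i (replayStrat σ i s (r m) (hist π m))) v0 (r m + t) = π (m + t) := by
  have hρs (n : ℕ) : ρ (n + 1) = σ (G.owner (ρ n)) (hist ρ n) (ρ n) := hρ ▸ outcome_succ n
  have hπs (n : ℕ) : π (n + 1) = updProfile (reindexProfile σ ρ r) i s (G.owner (π n))
      (hist π n) (π n) := hπ ▸ outcome_succ n
  set q := r m
  set f : ℕ → V := fun j => if j < q then ρ j else π (m + (j - q)) with hf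
  have hfρ : ∀ j ≤ q, f j = ρ j := by
    intro j hj
    rcases hj.lt_or_eq with hj | rfl
    · simp [hf, hj]
    · simp [hf, hagree m le_rfl, q]
  have hfπ : ∀ t, f (q + t) = π (m + t) := fun t => by simp [hf]
  suffices houtcome : outcome G (updProfile σ i (replayStrat σ i s q (hist π m))) v0 = f by
    rw [houtcome, hfπ]
  refine outcome_eq_of ((hfρ 0 (Nat.zero_le _)).trans (hρ ▸ outcome_zero)) fun n => ?_
  rcases lt_or_ge n q with hn | hn
  · rw [hist_congr fun j hj => hfρ j (by omega), hfρ n hn.le, hfρ (n + 1) hn, hρs]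
    unfold updProfile
    split_ifs with ho
    · subst ho
      simp [replayStrat, hn]
    · rfl
  · obtain ⟨t, rfl⟩ := Nat.exists_eq_add_of_le hn
    have hhist : hist f (q + t) = hist ρ q ++ hist (fun t => π (m + t)) t := by
      rw [hist_add, hist_congr fun j hj => hfρ j hj.le]
      congr 1
      exact hist_congr fun j _ => hfπ j
    rw [hhist, hfπ, add_assoc, hfπ, ← add_assoc, hπs]
    unfold updProfile
    split_ifs with ho
    · rw [replayStrat, if_neg (by simp), List.drop_left' (length_hist _ _), ← hist_add]
    · rw [reindexProfile_hist hagree (by omega) fun _ => hne, drop_hist]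

/-- The hypothesis `hcost` says that a deviation from `ρ ∘ r` after step `m` that reaches `F i`
at step `m + t`, replayed from step `r m` of `ρ`, reaches it at step `r m + t`. -/
theorem IsNE.exists_outcome_eq_comp (hσ : IsNE G σ v0)
    (h0 : outcome G σ v0 (r 0) = v0)
    (hstep : ∀ m, outcome G σ v0 (r m + 1) = outcome G σ v0 (r (m + 1)))
    (hcost : ∀ i m t, cost (G.F i) (outcome G σ v0) ≤ (r m + t : ℕ) →
      cost (G.F i) (outcome G σ v0 ∘ r) ≤ (m + t : ℕ)) :
    ∃ τ, IsNE G τ v0 ∧ outcome G τ v0 = outcome G σ v0 ∘ r := by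
  generalize hρ : outcome G σ v0 = ρ at h0 hstep hcost ⊢
  have hτ := outcome_reindexProfile hρ h0 hstep
  refine ⟨reindexProfile σ ρ r, ⟨fun j pl v => hσ.1 j _ v, fun i s hs => ?_⟩, hτ⟩
  rw [hτ]
  generalize hπ : outcome G (updProfile (reindexProfile σ ρ r) i s) v0 = π
  by_cases hdev : ∀ j, π j = ρ (r j)
  · rw [show π = ρ ∘ r from funext hdev]
  push Not at hdev
  obtain ⟨m, hagree, hne⟩ := exists_first_ne (hπ ▸ outcome_zero.trans h0.symm) hdev
  refine le_cost fun c hc => ?_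
  by_cases hcm : c ≤ m
  · exact cost_le_of_mem (show ρ (r c) ∈ G.F i by rw [← hagree c hcm]; exact hc)
  obtain ⟨t, rfl⟩ := Nat.exists_eq_add_of_le (not_le.1 hcm).le
  have hdev_cost := hσ.2 i _ (isStrategy_replayStrat (hσ.1 i) hs (r m) (hist π m))
  rw [hρ] at hdev_cost
  refine hcost i m t (hdev_cost.trans (cost_le_of_mem ?_))
  rwa [outcome_replayStrat hρ hπ hagree hne]

end Reindexing

section Cycles

variable {F : P → Set V} {ρ : ℕ → V} {k l : ℕ}

lemma visitPrefix_mono {j j' : ℕ} (h : j ≤ j') : visitPrefix F ρ j ⊆ visitPrefix F ρ j' :=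
  fun _ ⟨n, hn, hF⟩ => ⟨n, hn.trans h, hF⟩

lemma visit_removeCycle_subset : visit F (removeCycle ρ k l) ⊆ visit F ρ := by
  rintro i ⟨n, hn⟩
  unfold removeCycle at hn
  split_ifs at hn
  exacts [⟨_, hn⟩, ⟨_, hn⟩]

lemma UnnecessaryCycle.cost_removeCycle_le_of_first (hc : UnnecessaryCycle F ρ k l) {i : P}
    {n : ℕ} (hn : ρ n ∈ F i) (hfirst : ∀ j < n, ρ j ∉ F i) :
    cost (F i) (removeCycle ρ k l) ≤ (if k < n then n - l else n : ℕ) := by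
  split_ifs with hkn
  · have hln : k + l < n := by
      by_contra hle
      obtain ⟨j, hjk, hj⟩ : i ∈ visitPrefix F ρ k := hc.2.2 ▸ ⟨n, by omega, hn⟩
      exact hfirst j (by omega) hj
    refine cost_le_of_mem ?_
    rwa [removeCycle, if_neg (by omega), Nat.sub_add_cancel (by omega)]
  · exact cost_le_of_mem (by rwa [removeCycle, if_pos (by omega)])

lemma UnnecessaryCycle.cost_removeCycle_le (hc : UnnecessaryCycle F ρ k l) (i : P) :
    cost (F i) (removeCycle ρ k l) ≤ cost (F i) ρ := by
  refine le_cost fun c hc' => ?_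
  obtain ⟨n, hnc, hn, hfirst⟩ := exists_first_mem_of_cost_le (cost_le_of_mem hc')
  refine (hc.cost_removeCycle_le_of_first hn hfirst).trans (Nat.cast_le.2 ?_)
  split_ifs <;> omega

lemma UnnecessaryCycle.cost_removeCycle_le_of_le (hc : UnnecessaryCycle F ρ k l) {i : P}
    {x : ℕ} (hkx : k ≤ x) (h : cost (F i) ρ ≤ (x + l : ℕ)) :
    cost (F i) (removeCycle ρ k l) ≤ x := by
  obtain ⟨n, hnx, hn, hfirst⟩ := exists_first_mem_of_cost_le h
  refine (hc.cost_removeCycle_le_of_first hn hfirst).trans (Nat.cast_le.2 ?_)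
  split_ifs <;> omega

/-- For `j < N` the sets `visitPrefix F ρ j` increase and miss `i₀`, so they have fewer than
`|P|` cardinalities and some pair (vertex, cardinality) repeats. -/
lemma exists_unnecessaryCycle [Fintype V] [Fintype P] {i₀ : P} {N : ℕ}
    (hN : Fintype.card P * Fintype.card V < N) (hi₀ : ∀ j < N, ρ j ∉ F i₀) :
    ∃ k l, k + l < N ∧ UnnecessaryCycle F ρ k l := by
  have hcard : ∀ j < N, (visitPrefix F ρ j).ncard < Fintype.card P := by
    intro j hj
    rw [← Nat.card_eq_fintype_card]
    refine Set.ncard_lt_card fun huniv => ?_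
    obtain ⟨n, hn, hF⟩ : i₀ ∈ visitPrefix F ρ j := huniv ▸ Set.mem_univ i₀
    exact hi₀ n (by omega) hF
  obtain ⟨a, ha, b, hb, hab, heq⟩ := Finset.exists_ne_map_eq_of_card_lt_of_maps_to
    (s := Finset.range N) (t := Finset.univ ×ˢ Finset.range (Fintype.card P))
    (f := fun j => (ρ j, (visitPrefix F ρ j).ncard))
    (by rw [Finset.card_product, Finset.card_univ, Finset.card_range, Finset.card_range,
      mul_comm]; exact hN)
    (fun j hj => by simpa using hcard j (Finset.mem_range.1 hj))
  wlog hlt : a < b generalizing a b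
  · exact this b hb a ha hab.symm heq.symm (lt_of_le_of_ne (not_lt.1 hlt) hab.symm)
  simp only [Prod.mk.injEq] at heq
  refine ⟨a, b - a, by have := Finset.mem_range.1 hb; omega, by omega, ?_, ?_⟩ <;>
    rw [Nat.add_sub_cancel' hlt.le]
  · exact heq.1
  · exact Set.eq_of_subset_of_ncard_le (visitPrefix_mono hlt.le) heq.2.ge

end Cycles

section Loops

lemma add_one_mod_eq_ite {p : ℕ} (hp : 0 < p) (x : ℕ) :
    (x + 1) % p = if x % p + 1 = p then 0 else x % p + 1 := by
  rcases Nat.lt_or_ge 1 p with h1 | h1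
  · rw [Nat.add_mod, Nat.one_mod_eq_one.2 (by omega)]
    split_ifs with h
    · rw [h, Nat.mod_self]
    · exact Nat.mod_eq_of_lt (by have := Nat.mod_lt x hp; omega)
  · obtain rfl : p = 1 := by omega
    simp [Nat.mod_one]

/-- `ρ ∘ loopIndex n p` is the lasso `ρ₀ ⋯ ρₙ₋₁ (ρₙ ⋯ ρₙ₊ₚ₋₁)^ω`. -/
def loopIndex (n p m : ℕ) : ℕ := if m < n then m else n + (m - n) % p

lemma loopIndex_le (n p m : ℕ) : loopIndex n p m ≤ m := by
  unfold loopIndex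
  split_ifs
  · exact le_rfl
  · have := Nat.mod_le (m - n) p
    omega

lemma loopIndex_of_le {n p m : ℕ} (h : m ≤ n) : loopIndex n p m = m := by
  unfold loopIndex
  split_ifs
  · rfl
  · obtain rfl : m = n := by omega
    simp

lemma loopIndex_add_period {n p m : ℕ} (h : n ≤ m) : loopIndex n p (m + p) = loopIndex n p m := by
  simp only [loopIndex, if_neg (by omega : ¬m + p < n), if_neg (by omega : ¬m < n),
    Nat.sub_add_comm h, Nat.add_mod_right]

lemma comp_loopIndex_succ {ρ : ℕ → V} {n p : ℕ} (hp : 0 < p) (hρ : ρ (n + p) = ρ n) (m : ℕ) :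
    ρ (loopIndex n p m + 1) = ρ (loopIndex n p (m + 1)) := by
  rcases lt_or_ge m n with hm | hm
  · rw [loopIndex_of_le hm.le, loopIndex_of_le hm]
  · simp only [loopIndex, if_neg (by omega : ¬m < n), if_neg (by omega : ¬m + 1 < n),
      Nat.sub_add_comm hm, add_one_mod_eq_ite hp]
    split_ifs with h
    · rw [add_assoc, h, hρ, add_zero]
    · rfl

lemma IsLasso.mono {ρ : ℕ → V} {L L' : ℕ} (h : IsLasso ρ L) (hL : L ≤ L') : IsLasso ρ L' :=
  let ⟨n, p, hp, hnp, hper⟩ := h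
  ⟨n, p, hp, hnp.trans hL, hper⟩

lemma exists_repeat_in_window [Fintype V] (ρ : ℕ → V) (a : ℕ) :
    ∃ n p, a ≤ n ∧ 0 < p ∧ n + p ≤ a + Fintype.card V ∧ ρ (n + p) = ρ n := by
  obtain ⟨x, y, hxy, heq⟩ := Fintype.exists_ne_map_eq_of_card_lt
    (fun j : Fin (Fintype.card V + 1) => ρ (a + j)) (by simp)
  wlog hlt : x < y generalizing x y
  · exact this y x hxy.symm heq.symm (lt_of_le_of_ne (not_lt.1 hlt) hxy.symm)
  refine ⟨a + x, y - x, by omega, by omega, by omega, ?_⟩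
  rw [add_assoc, Nat.add_sub_cancel' hlt.le]
  exact heq.symm

end Loops

section Equilibria

variable {G : Game P V} {σ : P → Strat V} {v0 : V}

theorem IsNE.exists_outcome_eq_removeCycle (hσ : IsNE G σ v0) {k l : ℕ}
    (hc : UnnecessaryCycle G.F (outcome G σ v0) k l) :
    ∃ τ, IsNE G τ v0 ∧ outcome G τ v0 = removeCycle (outcome G σ v0) k l := by
  set r : ℕ → ℕ := fun m => if m < k then m else m + l with hr
  have hcomp : outcome G σ v0 ∘ r = removeCycle (outcome G σ v0) k l := by
    funext m
    simp only [Function.comp, hr, removeCycle]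
    split_ifs with hmk hmk'
    · rfl
    · omega
    · rw [show m = k by omega, hc.2.1]
    · rfl
  rw [← hcomp]
  refine hσ.exists_outcome_eq_comp ?_ (fun m => ?_) fun i m t h => ?_
  · exact (congrFun hcomp 0).trans (if_pos (Nat.zero_le k))
  · simp only [hr]
    split_ifs with hmk hmk'
    · rfl
    · rw [show m + 1 = k by omega, hc.2.1]
    · omega
    · rw [add_right_comm]
  · rw [hcomp]
    by_cases hm : m < k
    · simp only [hr, if_pos hm] at h
      exact (hc.cost_removeCycle_le i).trans h
    · simp only [hr, if_neg hm] at h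
      exact hc.cost_removeCycle_le_of_le (by omega) (by rwa [add_right_comm])

theorem IsNE.exists_cost_le_card_mul_card [Fintype V] [Fintype P] (hσ : IsNE G σ v0) :
    ∃ τ, IsNE G τ v0 ∧
      (∀ i, cost (G.F i) (outcome G τ v0) ≤ cost (G.F i) (outcome G σ v0)) ∧
      ∀ i ∈ visit G.F (outcome G τ v0),
        cost (G.F i) (outcome G τ v0) ≤ (Fintype.card P * Fintype.card V : ℕ) := by
  obtain ⟨N, hN⟩ := exists_cost_le_of_mem_visit G.F (outcome G σ v0)
  induction N using Nat.strong_induction_on generalizing σ with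
  | _ N ih =>
    by_cases hsmall : N ≤ Fintype.card P * Fintype.card V
    · exact ⟨σ, hσ, fun _ => le_rfl, fun i hi => (hN i hi).trans (Nat.cast_le.2 hsmall)⟩
    by_cases hearly :
        ∀ i ∈ visit G.F (outcome G σ v0), cost (G.F i) (outcome G σ v0) ≤ (N - 1 : ℕ)
    · exact ih (N - 1) (by omega) hσ hearly
    push Not at hearly
    obtain ⟨i₀, -, hi₀⟩ := hearly
    have hlate : ∀ j < N, outcome G σ v0 j ∉ G.F i₀ := fun j hj hF =>
      hi₀.not_ge ((cost_le_of_mem hF).trans (Nat.cast_le.2 (by omega)))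
    obtain ⟨k, l, hkl, hc⟩ := exists_unnecessaryCycle (not_le.1 hsmall) hlate
    obtain ⟨τ₁, hτ₁, hout⟩ := hσ.exists_outcome_eq_removeCycle hc
    have hN₁ : ∀ i ∈ visit G.F (outcome G τ₁ v0),
        cost (G.F i) (outcome G τ₁ v0) ≤ (N - l : ℕ) := by
      rw [hout]
      refine fun i hi => hc.cost_removeCycle_le_of_le (by omega) ?_
      rw [Nat.sub_add_cancel (by omega)]
      exact hN i (visit_removeCycle_subset hi)
    obtain ⟨τ, hτ, hle, hvis⟩ := ih (N - l) (by have := hc.1; omega) hτ₁ hN₁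
    exact ⟨τ, hτ, fun i => (hle i).trans (hout ▸ hc.cost_removeCycle_le i), hvis⟩

theorem IsNE.exists_isLasso (hσ : IsNE G σ v0) {n p : ℕ} (hp : 0 < p)
    (hcycle : outcome G σ v0 (n + p) = outcome G σ v0 n)
    (hvis : ∀ i ∈ visit G.F (outcome G σ v0), cost (G.F i) (outcome G σ v0) ≤ n) :
    ∃ τ, IsNE G τ v0 ∧ IsLasso (outcome G τ v0) (n + p) ∧
      ∀ i, cost (G.F i) (outcome G τ v0) = cost (G.F i) (outcome G σ v0) := by
  have hcost (i : P) :
      cost (G.F i) (outcome G σ v0 ∘ loopIndex n p) = cost (G.F i) (outcome G σ v0) :=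
    cost_comp_eq (fun _ => loopIndex_of_le) fun h => hvis i (mem_visit_iff_cost_ne_top.2 h)
  obtain ⟨τ, hτ, hout⟩ := hσ.exists_outcome_eq_comp (r := loopIndex n p)
    (by rw [loopIndex_of_le (Nat.zero_le n)]; rfl) (comp_loopIndex_succ hp hcycle)
    fun i m t h => (hcost i).trans_le
      (h.trans (Nat.cast_le.2 (Nat.add_le_add_right (loopIndex_le n p m) t)))
  refine ⟨τ, hτ, ⟨n, p, hp, le_rfl, fun k hk => ?_⟩, fun i => hout ▸ hcost i⟩
  simp [hout, loopIndex_add_period hk]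

end Equilibria

/-- if some NE has cost profile ≤ y then some NE with a short
lasso outcome has cost profile ≤ y, and cost ≤ |Π|·|V| for visiting players. -/
theorem stmt7 {V P : Type} [Fintype V] [Fintype P] (G : Game P V) (v0 : V)
    (y : P → ℕ∞)
    (h : ∃ σ : P → Strat V, IsNE G σ v0 ∧
      ∀ i, cost (G.F i) (outcome G σ v0) ≤ y i) :
    ∃ τ : P → Strat V, IsNE G τ v0 ∧
      IsLasso (outcome G τ v0) ((Fintype.card P + 1) * Fintype.card V) ∧
      (∀ i, cost (G.F i) (outcome G τ v0) ≤ y i) ∧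
      ∀ i ∈ visit G.F (outcome G τ v0),
        cost (G.F i) (outcome G τ v0) ≤
          ((Fintype.card P * Fintype.card V : ℕ) : ℕ∞) := by
  obtain ⟨σ, hσ, hy⟩ := h
  obtain ⟨σ₁, hσ₁, hle, hvis⟩ := hσ.exists_cost_le_card_mul_card
  obtain ⟨n, p, hn, hp, hnp, hcycle⟩ :=
    exists_repeat_in_window (outcome G σ₁ v0) (Fintype.card P * Fintype.card V)
  obtain ⟨τ, hτ, hlasso, hcost⟩ :=
    hσ₁.exists_isLasso hp hcycle fun i hi => (hvis i hi).trans (Nat.cast_le.2 hn)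
  refine ⟨τ, hτ, hlasso.mono (by rwa [add_one_mul]), fun i => (hcost i).trans_le
    ((hle i).trans (hy i)), fun i hi => ?_⟩
  rw [hcost]
  exact hvis i (mem_visit_iff_cost_ne_top.2 (hcost i ▸ mem_visit_iff_cost_ne_top.1 hi))
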